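/- arXiv:0908.0042 — 3 statements merged into one kernel-verified Lean document; each statement's English description precedes it below -/
import Mathlib

section
/- Kung's matroid construction: Let G be a matrix over a field with row index set S and column index set T (disjoint finite sets). Define r on subsets of E = S ∪ T by r(s ∪ t) = rank(G(s, T∖t)) + |t| for s ⊆ S, t ⊆ T. Then r is the rank function of a matroid on E; that is, r(A) ≤ |A| for all A ⊆ E, r is monotone, and r is submodular: r(A∪B) + r(A∩B) ≤ r(A) + r(B) for all A,B ⊆ E. -/
/-- Rank of the submatrix of `G` with rows in `U` and columns in `V`. -/
noncomputable def rk {F S T : Type*} [Field F] [Fintype S] [Fintype T]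
    (G : Matrix S T F) (U : Finset S) (V : Finset T) : ℕ :=
  (G.submatrix (fun i : U => (i : S)) (fun j : V => (j : T))).rank

/-- Kung rank function on the disjoint union of rows and columns. -/
noncomputable def kungRank {F S T : Type*} [Field F] [Fintype S] [Fintype T]
    [DecidableEq T] (G : Matrix S T F) (A : Finset (S ⊕ T)) : ℕ :=
  rk G A.toLeft A.toRightᶜ + A.toRight.card

/-!
Kung's function is the rank function of a linear matroid: represent `s ∈ S` by the row
`G s ∈ F^T` and `t ∈ T` by the unit vector `e_t`. For `A = s ∪ t` the span of the vectors of `A`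
contains the span of `{e_j | j ∈ t}`, which is the kernel of the restriction `F^T → F^(T ∖ t)`;
hence its dimension is `|t|` plus the dimension of the span of the restricted rows, that is
`rank G(s, T ∖ t) + |t|`. Boundedness, monotonicity and submodularity hold for the dimension of
the span of any family of vectors.
-/

open Module Submodule

section LinearMatroid

variable {K V ι : Type*} [DivisionRing K] [AddCommGroup V] [Module K V] (v : ι → V)

theorem finrank_image_finset_le_card (A : Finset ι) : (v '' A).finrank K ≤ A.card := by
  classical
  rw [← Finset.coe_image]
  exact (finrank_span_finset_le_card _).trans Finset.card_image_le

variable [FiniteDimensional K V]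

theorem finrank_image_union_add_finrank_image_inter_le (A B : Set ι) :
    (v '' (A ∪ B)).finrank K + (v '' (A ∩ B)).finrank K ≤
      (v '' A).finrank K + (v '' B).finrank K := by
  have hsup : span K (v '' (A ∪ B)) = span K (v '' A) ⊔ span K (v '' B) := by
    rw [Set.image_union, span_union]
  have hinf : span K (v '' (A ∩ B)) ≤ span K (v '' A) ⊓ span K (v '' B) :=
    le_inf (span_mono (Set.image_mono Set.inter_subset_left))
      (span_mono (Set.image_mono Set.inter_subset_right))
  calc (v '' (A ∪ B)).finrank K + (v '' (A ∩ B)).finrank K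
      ≤ finrank K ↥(span K (v '' A) ⊔ span K (v '' B)) +
          finrank K ↥(span K (v '' A) ⊓ span K (v '' B)) := by
        rw [Set.finrank, hsup]
        exact Nat.add_le_add_left (Submodule.finrank_mono hinf) _
    _ = (v '' A).finrank K + (v '' B).finrank K :=
        Submodule.finrank_sup_add_finrank_inf_eq _ _

end LinearMatroid

theorem Submodule.finrank_sup_ker {K V W : Type*} [DivisionRing K] [AddCommGroup V]
    [Module K V] [FiniteDimensional K V] [AddCommGroup W] [Module K W]
    (p : Submodule K V) (f : V →ₗ[K] W) :
    finrank K ↥(p ⊔ LinearMap.ker f) = finrank K ↥(p.map f) + finrank K ↥(LinearMap.ker f) := by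
  have hrange : LinearMap.range (f.domRestrict (p ⊔ LinearMap.ker f)) = p.map f := by
    rw [LinearMap.range_domRestrict, map_sup, LinearMap.le_ker_iff_map.mp le_rfl, sup_bot_eq]
  have hker : LinearMap.ker (f.domRestrict (p ⊔ LinearMap.ker f)) ≃ₗ[K] LinearMap.ker f := by
    rw [LinearMap.ker_domRestrict]
    exact comapSubtypeEquivOfLe le_sup_right
  rw [← (f.domRestrict _).finrank_range_add_finrank_ker, hrange, hker.finrank_eq]

theorem Pi.ker_funLeft_eq_spanSubset {R η κ : Type*} [Semiring R] [Finite η] {f : κ → η}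
    {s : Set η} (hf : Set.range f = sᶜ) :
    LinearMap.ker (LinearMap.funLeft R R f) = Pi.spanSubset R s := by
  ext v
  rw [LinearMap.mem_ker, Pi.mem_spanSubset_iff, funext_iff]
  simp only [LinearMap.funLeft_apply, Pi.zero_apply, ← Set.mem_compl_iff, ← hf,
    Set.forall_mem_range]

section Kung

variable {F S T : Type*} [Field F] [Fintype T] (G : Matrix S T F)

noncomputable def kungVector : S ⊕ T → T → F :=
  Sum.elim G.row (Pi.basisFun F T)

theorem rk_eq_finrank_map_span [Fintype S] (U : Finset S) (V : Finset T) :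
    rk G U V = finrank F ↥((span F (G.row '' U)).map (LinearMap.funLeft F F ((↑) : V → T))) := by
  rw [rk, Matrix.rank_eq_finrank_span_row, map_span, ← Set.image_comp, Set.image_eq_range]
  rfl

theorem span_kungVector_image (A : Finset (S ⊕ T)) :
    span F (kungVector G '' A) = span F (G.row '' A.toLeft) ⊔ Pi.spanSubset F A.toRight := by
  rw [kungVector, Set.image_sumElim, span_union, Pi.spanSubset]
  congr 3 <;> ext <;> simp

theorem kungRank_eq_finrank_image [Fintype S] [DecidableEq T] (A : Finset (S ⊕ T)) :
    kungRank G A = (kungVector G '' A).finrank F := by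
  have hcols : Set.range ((↑) : (A.toRightᶜ : Finset T) → T) = (↑A.toRight)ᶜ := by
    simp [Set.compl_def]
  rw [Set.finrank, span_kungVector_image, ← Pi.ker_funLeft_eq_spanSubset (R := F) hcols,
    Submodule.finrank_sup_ker, ← rk_eq_finrank_map_span, Pi.ker_funLeft_eq_spanSubset hcols,
    Pi.dim_spanSubset, Set.ncard_coe_finset, kungRank]

end Kung

theorem kung_matroid {F S T : Type*} [Field F] [Fintype S] [Fintype T]
    [DecidableEq S] [DecidableEq T] (G : Matrix S T F) :
    (∀ A : Finset (S ⊕ T), kungRank G A ≤ A.card) ∧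
    (∀ A B : Finset (S ⊕ T), A ⊆ B → kungRank G A ≤ kungRank G B) ∧
    (∀ A B : Finset (S ⊕ T),
      kungRank G (A ∪ B) + kungRank G (A ∩ B) ≤ kungRank G A + kungRank G B) := by
  simp only [kungRank_eq_finrank_image, Finset.coe_union, Finset.coe_inter]
  exact ⟨finrank_image_finset_le_card _,
    fun A B h => Set.finrank_mono (Set.image_mono (Finset.coe_subset.mpr h)),
    fun A B => finrank_image_union_add_finrank_image_inter_le _ _ _⟩
end

section
/- Main theorem (block-matrix transversal theorem): Let G be a matrix over a field whose row set is partitioned as S = S₁ ∪ ⋯ ∪ S_m and column set as T = T₁ ∪ ⋯ ∪ T_n. Given non-negative integers s₁,…,s_m, t₁,…,t_n with Σᵢ sᵢ = Σⱼ tⱼ = R, there exist subsets 𝐬ᵢ ⊆ Sᵢ with |𝐬ᵢ| = sᵢ and 𝐭ⱼ ⊆ Tⱼ with |𝐭ⱼ| = tⱼ such that the R×R submatrix G(⋃ᵢ 𝐬ᵢ, ⋃ⱼ 𝐭ⱼ) is nonsingular, if and only if for every I ⊆ {1,…,m} and K ⊆ {1,…,n}, rank(G(⋃_{i∈I} Sᵢ,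 ⋃_{k∈K} T_k)) ≥ Σ_{i∈I} sᵢ + Σ_{k∈K} t_k − R. -/
/-- The submatrix of `G` on rows `U` and columns `V` is square and nonsingular. -/
def IsNonsingularSub {F S T : Type*} [Field F] [Fintype S] [Fintype T] [DecidableEq S]
    (G : Matrix S T F) (U : Finset S) (V : Finset T) : Prop :=
  ∃ e : (U : Finset S) ≃ (V : Finset T),
    ((G.submatrix (fun i : U => (i : S)) (fun j : V => (j : T))).submatrix id e).det ≠ 0

open Finset Submodule Module
open scoped Matrix

theorem Submodule.finrank_map_add_finrank_inf_ker {F M N : Type*} [Field F] [AddCommGroup M]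
    [Module F M] [AddCommGroup N] [Module F N] [FiniteDimensional F M] (p : Submodule F M)
    (f : M →ₗ[F] N) : finrank F (p.map f) + finrank F ↥(p ⊓ LinearMap.ker f) = finrank F p := by
  rw [← (f.domRestrict p).finrank_range_add_finrank_ker, LinearMap.range_domRestrict,
    LinearMap.ker_domRestrict, ← finrank_map_subtype_eq, map_comap_subtype]

theorem Matrix.rank_eq_card_iff_det_ne_zero {n F : Type*} [Field F] [Fintype n] [DecidableEq n]
    (M : Matrix n n F) : M.rank = Fintype.card n ↔ M.det ≠ 0 := by
  refine ⟨fun h => ?_, Matrix.rank_of_det_ne_zero⟩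
  have hrange : LinearMap.range M.mulVecLin = ⊤ :=
    eq_top_of_finrank_eq (by rw [← Matrix.rank, h, finrank_fintype_fun_eq_card])
  exact (Matrix.isUnit_iff_isUnit_det M).1
    (Matrix.mulVec_surjective_iff_isUnit.1 (LinearMap.range_eq_top.1 hrange)) |>.ne_zero

theorem Finset.card_biUnion_eq_sum {ι α : Type*} [DecidableEq α] {P a : ι → Finset α}
    {c : ι → ℕ} (hP : ∀ i j, i ≠ j → Disjoint (P i) (P j)) (ha : ∀ i, a i ⊆ P i)
    (hc : ∀ i, #(a i) = c i) (I : Finset ι) : #(I.biUnion a) = ∑ i ∈ I, c i := by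
  rw [card_biUnion fun i _ j _ hij => (hP i j hij).mono (ha i) (ha j)]
  exact sum_congr rfl fun i _ => hc i

theorem Finset.biUnion_update_insert {ι α : Type*} [DecidableEq ι] [DecidableEq α]
    {I : Finset ι} {i₀ : ι} (h : i₀ ∈ I) (a : ι → Finset α) (x : α) :
    I.biUnion (Function.update a i₀ (insert x (a i₀))) = insert x (I.biUnion a) := by
  ext y
  simp only [mem_biUnion, mem_insert, Function.update_apply]
  grind

theorem Finset.sum_add_pi_single {ι M : Type*} [DecidableEq ι] [AddCommMonoid M] (f : ι → M)
    (i₀ : ι) (c : M) (I : Finset ι) :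
    ∑ i ∈ I, (f + Pi.single i₀ c : ι → M) i = ∑ i ∈ I, f i + if i₀ ∈ I then c else 0 := by
  rw [← sum_pi_single' i₀ c I, ← sum_add_distrib]
  rfl

theorem Pi.exists_eq_add_single_of_ne_zero {ι : Type*} [DecidableEq ι] {s : ι → ℕ} {i₀ : ι}
    (h : s i₀ ≠ 0) : ∃ s' : ι → ℕ, s = s' + Pi.single i₀ 1 := by
  refine ⟨Function.update s i₀ (s i₀ - 1), funext fun i => ?_⟩
  rcases eq_or_ne i i₀ with rfl | hi
  · simp only [Pi.add_apply, Function.update_self, Pi.single_eq_same]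
    omega
  · simp [hi]

noncomputable abbrev restrictₗ (F : Type*) [Semiring F] {T : Type*} (V : Finset T) :
    (T → F) →ₗ[F] (V → F) :=
  LinearMap.funLeft F F Subtype.val

section RowSpace

variable {F S T : Type*} [Field F]

theorem mem_ker_restrictₗ {V : Finset T} {g : T → F} :
    g ∈ LinearMap.ker (restrictₗ F V) ↔ ∀ j ∈ V, g j = 0 := by
  simp [funext_iff]

theorem ker_restrictₗ_anti {V V' : Finset T} (h : V ⊆ V') :
    LinearMap.ker (restrictₗ F V') ≤ LinearMap.ker (restrictₗ F V) := fun _ hg =>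
  mem_ker_restrictₗ.2 fun j hj => mem_ker_restrictₗ.1 hg j (h hj)

theorem ker_restrictₗ_inf_le [DecidableEq T] (V V' : Finset T) :
    LinearMap.ker (restrictₗ F V) ⊓ LinearMap.ker (restrictₗ F V') ≤
      LinearMap.ker (restrictₗ F (V ∪ V')) := fun _ hg => by
  simp only [Submodule.mem_inf, mem_ker_restrictₗ, mem_union] at hg ⊢
  rintro j (hj | hj)
  exacts [hg.1 j hj, hg.2 j hj]

def rowSpan (G : Matrix S T F) (U : Finset S) : Submodule F (T → F) :=
  span F (G.row '' U)

theorem rowSpan_union [DecidableEq S] (G : Matrix S T F) (U U' : Finset S) :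
    rowSpan G (U ∪ U') = rowSpan G U ⊔ rowSpan G U' := by
  rw [rowSpan, coe_union, Set.image_union, span_union, rowSpan, rowSpan]

theorem rowSpan_mono (G : Matrix S T F) {U U' : Finset S} (h : U ⊆ U') :
    rowSpan G U ≤ rowSpan G U' :=
  span_mono (Set.image_mono (coe_subset.2 h))

end RowSpace

section RankFunction

variable {F S T : Type*} [Field F] [Fintype S] [Fintype T]

theorem rk_eq_finrank_map_rowSpan (G : Matrix S T F) (U : Finset S) (V : Finset T) :
    rk G U V = finrank F ((rowSpan G U).map (restrictₗ F V)) := by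
  rw [rk, Matrix.rank_eq_finrank_span_row, rowSpan, map_span, ← Set.image_comp,
    Set.image_eq_range]
  rfl

theorem rk_add_finrank_inf_ker (G : Matrix S T F) (U : Finset S) (V : Finset T) :
    rk G U V + finrank F ↥(rowSpan G U ⊓ LinearMap.ker (restrictₗ F V)) =
      finrank F (rowSpan G U) := by
  rw [rk_eq_finrank_map_rowSpan, finrank_map_add_finrank_inf_ker]

theorem rk_transpose (G : Matrix S T F) (U : Finset S) (V : Finset T) :
    rk Gᵀ V U = rk G U V := by
  rw [rk, rk, ← Matrix.transpose_submatrix, Matrix.rank_transpose]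

theorem rk_le_card_left (G : Matrix S T F) (U : Finset S) (V : Finset T) : rk G U V ≤ #U :=
  (Matrix.rank_le_card_height _).trans_eq (Fintype.card_coe U)

theorem rk_mono_left (G : Matrix S T F) {U U' : Finset S} (h : U ⊆ U') (V : Finset T) :
    rk G U V ≤ rk G U' V := by
  simp only [rk_eq_finrank_map_rowSpan]
  exact finrank_mono (map_mono (rowSpan_mono G h))

theorem rk_mono_right (G : Matrix S T F) (U : Finset S) {V V' : Finset T} (h : V ⊆ V') :
    rk G U V ≤ rk G U V' := by
  simpa only [rk_transpose] using rk_mono_left Gᵀ h U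

theorem rk_union_inter_add_rk_inter_union_le [DecidableEq S] [DecidableEq T] (G : Matrix S T F)
    (U U' : Finset S) (V V' : Finset T) :
    rk G (U ∪ U') (V ∩ V') + rk G (U ∩ U') (V ∪ V') ≤ rk G U V + rk G U' V' := by
  have hsup := rk_add_finrank_inf_ker G (U ∪ U') (V ∩ V')
  rw [rowSpan_union] at hsup
  have h := rk_add_finrank_inf_ker G U V
  have h' := rk_add_finrank_inf_ker G U' V'
  set X := rowSpan G U
  set X' := rowSpan G U'
  set Z := LinearMap.ker (restrictₗ F V)
  set Z' := LinearMap.ker (restrictₗ F V')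
  have hinf := finrank_map_add_finrank_inf_ker (X ⊓ X') (restrictₗ F (V ∪ V'))
  have hinf_le : rk G (U ∩ U') (V ∪ V') ≤ finrank F ((X ⊓ X').map (restrictₗ F (V ∪ V'))) := by
    rw [rk_eq_finrank_map_rowSpan]
    exact finrank_mono (map_mono (le_inf (rowSpan_mono G inter_subset_left)
      (rowSpan_mono G inter_subset_right)))
  have hX := finrank_sup_add_finrank_inf_eq X X'
  have hXZ := finrank_sup_add_finrank_inf_eq (X ⊓ Z) (X' ⊓ Z')
  have hsup_ge : finrank F ↥(X ⊓ Z ⊔ X' ⊓ Z') ≤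
      finrank F ↥((X ⊔ X') ⊓ LinearMap.ker (restrictₗ F (V ∩ V'))) :=
    finrank_mono (sup_le (inf_le_inf le_sup_left (ker_restrictₗ_anti inter_subset_left))
      (inf_le_inf le_sup_right (ker_restrictₗ_anti inter_subset_right)))
  have hinf_ge : finrank F ↥(X ⊓ Z ⊓ (X' ⊓ Z')) ≤
      finrank F ↥(X ⊓ X' ⊓ LinearMap.ker (restrictₗ F (V ∪ V'))) :=
    finrank_mono (le_inf (inf_le_inf inf_le_left inf_le_left)
      ((inf_le_inf inf_le_right inf_le_right).trans (ker_restrictₗ_inf_le V V')))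
  omega

theorem rk_add_rk_le_of_subset [DecidableEq S] [DecidableEq T] (G : Matrix S T F)
    {U U' U₁ U₂ : Finset S} {V V' V₁ V₂ : Finset T} (hU₁ : U₁ ⊆ U ∪ U') (hU₂ : U₂ ⊆ U ∩ U')
    (hV₁ : V₁ ⊆ V ∩ V') (hV₂ : V₂ ⊆ V ∪ V') :
    rk G U₁ V₁ + rk G U₂ V₂ ≤ rk G U V + rk G U' V' :=
  calc rk G U₁ V₁ + rk G U₂ V₂
      ≤ rk G (U ∪ U') (V ∩ V') + rk G (U ∩ U') (V ∪ V') :=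
        add_le_add ((rk_mono_left G hU₁ _).trans (rk_mono_right G _ hV₁))
          ((rk_mono_left G hU₂ _).trans (rk_mono_right G _ hV₂))
    _ ≤ rk G U V + rk G U' V' := rk_union_inter_add_rk_inter_union_le G U U' V V'

theorem rk_le_rk_add_card_sdiff_left [DecidableEq S] (G : Matrix S T F) {U U' : Finset S}
    (h : U' ⊆ U) (V : Finset T) : rk G U V ≤ rk G U' V + #(U \ U') := by
  classical
  have := rk_add_rk_le_of_subset G (U := U') (U' := U \ U') (U₂ := ∅) (V := V) (V' := V)
    (union_sdiff_of_subset h).ge (empty_subset _) (inter_self V).ge subset_union_left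
  have := rk_le_card_left G (U \ U') V
  omega

theorem rk_le_rk_add_card_sdiff_right [DecidableEq T] (G : Matrix S T F) (U : Finset S)
    {V V' : Finset T} (h : V' ⊆ V) : rk G U V ≤ rk G U V' + #(V \ V') := by
  simpa only [rk_transpose] using rk_le_rk_add_card_sdiff_left Gᵀ h U

theorem rk_insert_add_rk_le [DecidableEq S] (G : Matrix S T F) {U U' : Finset S}
    {V V' : Finset T} (hU : U ⊆ U') (hV : V' ⊆ V) (x : S) :
    rk G (insert x U') V' + rk G U V ≤ rk G (insert x U) V + rk G U' V' := by
  classical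
  exact rk_add_rk_le_of_subset G (by grind) (by grind) (by grind) (by grind)

theorem exists_rk_lt_rk_insert [DecidableEq S] (G : Matrix S T F) {U W : Finset S}
    {V : Finset T} (h : rk G U V < rk G (U ∪ W) V) :
    ∃ x ∈ W, rk G U V < rk G (insert x U) V := by
  by_contra! hW
  suffices ∀ W' ⊆ W, rk G (U ∪ W') V ≤ rk G U V from (this W Subset.rfl).not_gt h
  intro W' hW'
  induction W' using Finset.induction_on with
  | empty => simp
  | insert w W' _ ih =>
    have := rk_insert_add_rk_le G (subset_union_left : U ⊆ U ∪ W') (Subset.refl V) w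
    rw [union_insert]
    have := hW w (hW' (mem_insert_self w W'))
    have := ih ((subset_insert w W').trans hW')
    omega

theorem isNonsingularSub_iff [DecidableEq S] (G : Matrix S T F) (U : Finset S) (V : Finset T) :
    IsNonsingularSub G U V ↔ #U = #V ∧ rk G U V = #U := by
  have hrk (e : U ≃ V) : rk G U V =
      ((G.submatrix (fun i : U => (i : S)) (fun j : V => (j : T))).submatrix id e).rank :=
    (Matrix.rank_submatrix _ (Equiv.refl U) e).symm
  constructor
  · rintro ⟨e, he⟩
    have hcard : #U = #V := by simpa using Fintype.card_congr e
    rw [hrk e, (Matrix.rank_eq_card_iff_det_ne_zero _).2 he, Fintype.card_coe]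
    exact ⟨hcard, rfl⟩
  · rintro ⟨hcard, hrank⟩
    have e : U ≃ V := Fintype.equivOfCardEq (by simpa using hcard)
    refine ⟨e, (Matrix.rank_eq_card_iff_det_ne_zero _).1 ?_⟩
    rw [← hrk e, hrank, Fintype.card_coe]

theorem card_add_card_le_rk_add_of_isNonsingularSub [DecidableEq S] [DecidableEq T]
    (G : Matrix S T F) {U U' : Finset S} {V V' : Finset T} (h : IsNonsingularSub G U V)
    (hU : U' ⊆ U) (hV : V' ⊆ V) : #U' + #V' ≤ rk G U' V' + #U := by
  obtain ⟨hcard, hrk⟩ := (isNonsingularSub_iff G U V).1 h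
  have hrows := rk_le_rk_add_card_sdiff_left G hU V
  have hcols := rk_le_rk_add_card_sdiff_right G U' hV
  rw [card_sdiff_of_subset hU] at hrows
  rw [card_sdiff_of_subset hV] at hcols
  have := card_le_card hU
  have := card_le_card hV
  omega

end RankFunction

section Transversal

variable {F S T : Type*} [Field F] [Fintype S] [Fintype T] [DecidableEq S] [DecidableEq T]
  (G : Matrix S T F) {m n : ℕ} (Sp : Fin m → Finset S) (Tp : Fin n → Finset T)
  (s : Fin m → ℕ) (t : Fin n → ℕ) (A : Finset S) (B : Finset T) (R : ℕ)

/-- The rank condition once the rows `A` and the columns `B` have been chosen and the quotas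
lowered to `s` and `t`. -/
def TransversalCond : Prop :=
  ∀ I K, ∑ i ∈ I, s i + #A + (∑ k ∈ K, t k + #B) ≤
    rk G (I.biUnion Sp ∪ A) (K.biUnion Tp ∪ B) + R

def IsTight (I : Finset (Fin m)) (K : Finset (Fin n)) : Prop :=
  rk G (I.biUnion Sp ∪ A) (K.biUnion Tp ∪ B) + R = ∑ i ∈ I, s i + #A + (∑ k ∈ K, t k + #B)

variable {G Sp Tp s t A B R}

theorem transversalCond_transpose :
    TransversalCond Gᵀ Tp Sp t s B A R ↔ TransversalCond G Sp Tp s t A B R :=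
  forall_comm.trans <| forall₂_congr fun I K => by
    rw [rk_transpose, add_comm (∑ k ∈ K, t k + #B)]

namespace TransversalCond

theorem isTight_union_inter (hcond : TransversalCond G Sp Tp s t A B R)
    {I I' : Finset (Fin m)} {K K' : Finset (Fin n)} (h : IsTight G Sp Tp s t A B R I K)
    (h' : IsTight G Sp Tp s t A B R I' K') : IsTight G Sp Tp s t A B R (I ∪ I') (K ∩ K') := by
  have hcross := rk_add_rk_le_of_subset G (U := I.biUnion Sp ∪ A) (U' := I'.biUnion Sp ∪ A)
    (V := K.biUnion Tp ∪ B) (V' := K'.biUnion Tp ∪ B) (U₁ := (I ∪ I').biUnion Sp ∪ A)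
    (U₂ := (I ∩ I').biUnion Sp ∪ A) (V₁ := (K ∩ K').biUnion Tp ∪ B)
    (V₂ := (K ∪ K').biUnion Tp ∪ B) (by grind) (by grind) (by grind) (by grind)
  have := hcond (I ∪ I') (K ∩ K')
  have := hcond (I ∩ I') (K ∪ K')
  have := sum_union_inter (s₁ := I) (s₂ := I') (f := s)
  have := sum_union_inter (s₁ := K) (s₂ := K') (f := t)
  unfold IsTight at h h' ⊢
  omega

theorem exists_greatest_isTight (hcond : TransversalCond G Sp Tp s t A B R)
    (ht : ∑ j, t j + #B = R) (i₀ : Fin m) :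
    ∃ I₀ K₀, i₀ ∉ I₀ ∧ IsTight G Sp Tp s t A B R I₀ K₀ ∧
      ∀ I K, i₀ ∉ I → IsTight G Sp Tp s t A B R I K → I ⊆ I₀ ∧ K₀ ⊆ K := by
  classical
  let P : Finset (Finset (Fin m) × (Finset (Fin n))ᵒᵈ) :=
    {p | i₀ ∉ p.1 ∧ IsTight G Sp Tp s t A B R p.1 (OrderDual.ofDual p.2)}
  have hbot : (∅, OrderDual.toDual univ) ∈ P := by
    refine mem_filter.2 ⟨mem_univ _, notMem_empty i₀, ?_⟩
    have hcond₀ := hcond ∅ univ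
    have := rk_le_card_left G A (univ.biUnion Tp ∪ B)
    show IsTight G Sp Tp s t A B R ∅ univ
    rw [IsTight]
    rw [biUnion_empty, empty_union, sum_empty] at hcond₀ ⊢
    omega
  have hsup : ∀ p ∈ P, ∀ q ∈ P, p ⊔ q ∈ P := by
    simp only [P, mem_filter, mem_univ, true_and]
    rintro p ⟨hp, hpt⟩ q ⟨hq, hqt⟩
    exact ⟨by simp [hp, hq], hcond.isTight_union_inter hpt hqt⟩
  obtain ⟨-, hi₀, htight⟩ := mem_filter.1 <|
    Finset.sup'_mem (P : Set (Finset (Fin m) × (Finset (Fin n))ᵒᵈ)) hsup P ⟨_, hbot⟩ id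
      fun _ => id
  refine ⟨_, _, hi₀, htight, fun I K hI hIK => ?_⟩
  exact le_sup' id (show (I, OrderDual.toDual K) ∈ P by simp [P, hI, hIK])

theorem exists_pivot_row {i₀ : Fin m}
    (hcond : TransversalCond G Sp Tp (s + Pi.single i₀ 1) t A B R) (ht : ∑ j, t j + #B = R) :
    ∃ x ∈ Sp i₀, x ∉ A ∧ TransversalCond G Sp Tp s t (insert x A) B R := by
  obtain ⟨I₀, K₀, hi₀, htight, hgreatest⟩ := hcond.exists_greatest_isTight ht i₀
  rw [IsTight, sum_add_pi_single, if_neg hi₀] at htight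
  have hlt : rk G (I₀.biUnion Sp ∪ A) (K₀.biUnion Tp ∪ B) <
      rk G (I₀.biUnion Sp ∪ A ∪ Sp i₀) (K₀.biUnion Tp ∪ B) := by
    have := hcond (insert i₀ I₀) K₀
    rw [sum_add_pi_single, if_pos (mem_insert_self i₀ I₀), sum_insert hi₀, biUnion_insert,
      union_assoc, union_comm] at this
    omega
  obtain ⟨x, hx, hrk⟩ := exists_rk_lt_rk_insert G hlt
  have hxrow : x ∉ I₀.biUnion Sp ∪ A := fun h => hrk.ne (by rw [insert_eq_of_mem h])
  have hxA : x ∉ A := fun h => hxrow (mem_union_right _ h)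
  refine ⟨x, hx, hxA, fun I K => ?_⟩
  have hc := hcond I K
  rw [union_insert, card_insert_of_notMem hxA]
  by_cases hI : i₀ ∈ I
  · rw [insert_eq_of_mem (mem_union_left _ (mem_biUnion.2 ⟨i₀, hI, hx⟩))]
    rw [sum_add_pi_single, if_pos hI] at hc
    omega
  have hmono := rk_mono_left G (subset_insert x (I.biUnion Sp ∪ A)) (K.biUnion Tp ∪ B)
  by_cases htI : IsTight G Sp Tp (s + Pi.single i₀ 1) t A B R I K
  · obtain ⟨hII₀, hK₀K⟩ := hgreatest I K hI htI
    -- `x` raises the rank at the greatest tight pair, hence at every tight pair below it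
    have := rk_insert_add_rk_le G
      (union_subset_union_left (biUnion_subset_biUnion_of_subset_left Sp hII₀) :
        _ ⊆ I₀.biUnion Sp ∪ A)
      (union_subset_union_left (biUnion_subset_biUnion_of_subset_left Tp hK₀K) :
        _ ⊆ K.biUnion Tp ∪ B) x
    rw [IsTight, sum_add_pi_single, if_neg hI] at htI
    omega
  · rw [IsTight, sum_add_pi_single, if_neg hI] at htI
    rw [sum_add_pi_single, if_neg hI] at hc
    omega

theorem exists_rows (hcond : TransversalCond G Sp Tp s t A B R) (ht : ∑ j, t j + #B = R) :
    ∃ a : Fin m → Finset S, (∀ i, a i ⊆ Sp i) ∧ (∀ i, #(a i) = s i) ∧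
      Disjoint (univ.biUnion a) A ∧ TransversalCond G Sp Tp 0 t (univ.biUnion a ∪ A) B R := by
  induction hN : ∑ i, s i generalizing s A with
  | zero =>
    obtain rfl : s = 0 := funext fun i => sum_eq_zero_iff.1 hN i (mem_univ i)
    have hempty : univ.biUnion (fun _ : Fin m => (∅ : Finset S)) = ∅ := by grind
    refine ⟨fun _ => ∅, fun _ => empty_subset _, fun _ => rfl, ?_, ?_⟩
    · rw [hempty]
      exact disjoint_empty_left A
    · rwa [hempty, empty_union]
  | succ N ih =>
    obtain ⟨i₀, hi₀⟩ : ∃ i₀, s i₀ ≠ 0 := by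
      by_contra! h
      simp [h] at hN
    obtain ⟨s', rfl⟩ := Pi.exists_eq_add_single_of_ne_zero hi₀
    obtain ⟨x, hxSp, hxA, hcond'⟩ := hcond.exists_pivot_row ht
    obtain ⟨a, haSp, hacard, hadisj, hfinal⟩ :=
      ih hcond' (by simpa [sum_add_distrib] using hN)
    have hxa : x ∉ a i₀ := fun h =>
      disjoint_left.1 hadisj (mem_biUnion.2 ⟨i₀, mem_univ _, h⟩) (mem_insert_self x A)
    have hunion := biUnion_update_insert (mem_univ i₀) a x
    refine ⟨Function.update a i₀ (insert x (a i₀)), fun i => ?_, fun i => ?_, ?_, ?_⟩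
    · rcases eq_or_ne i i₀ with rfl | hi
      · simpa using insert_subset hxSp (haSp i)
      · simpa [hi] using haSp i
    · rcases eq_or_ne i i₀ with rfl | hi
      · simp [card_insert_of_notMem hxa, hacard]
      · simp [hi, hacard]
    · rw [hunion, disjoint_insert_left]
      exact ⟨hxA, disjoint_of_subset_right (subset_insert x A) hadisj⟩
    · rwa [hunion, insert_union, ← union_insert]

theorem isNonsingularSub (hcond : TransversalCond G Sp Tp 0 0 A B R) (hA : #A = R)
    (hB : #B = R) : IsNonsingularSub G A B := by
  have h := hcond ∅ ∅
  simp only [biUnion_empty, empty_union, sum_empty] at h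
  have := rk_le_card_left G A B
  exact (isNonsingularSub_iff G A B).2 ⟨by omega, by omega⟩

end TransversalCond

theorem transversalCond_of_isNonsingularSub (hSdisj : ∀ i j, i ≠ j → Disjoint (Sp i) (Sp j))
    (hTdisj : ∀ i j, i ≠ j → Disjoint (Tp i) (Tp j)) {a : Fin m → Finset S}
    {b : Fin n → Finset T} (haSp : ∀ i, a i ⊆ Sp i) (hacard : ∀ i, #(a i) = s i)
    (hbTp : ∀ j, b j ⊆ Tp j) (hbcard : ∀ j, #(b j) = t j)
    (hab : IsNonsingularSub G (univ.biUnion a) (univ.biUnion b)) :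
    TransversalCond G Sp Tp s t ∅ ∅ (∑ i, s i) := by
  intro I K
  have hle := card_add_card_le_rk_add_of_isNonsingularSub G hab
    (biUnion_subset_biUnion_of_subset_left a (subset_univ I))
    (biUnion_subset_biUnion_of_subset_left b (subset_univ K))
  have hmono : rk G (I.biUnion a) (K.biUnion b) ≤ rk G (I.biUnion Sp) (K.biUnion Tp) :=
    (rk_mono_left G (biUnion_mono fun i _ => haSp i) _).trans
      (rk_mono_right G _ (biUnion_mono fun j _ => hbTp j))
  rw [card_biUnion_eq_sum hSdisj haSp hacard, card_biUnion_eq_sum hTdisj hbTp hbcard,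
    card_biUnion_eq_sum hSdisj haSp hacard] at hle
  rw [card_empty, card_empty, union_empty, union_empty]
  omega

end Transversal

theorem block_matrix_transversal_general {F S T : Type*} [Field F] [Fintype S] [Fintype T]
    [DecidableEq S] [DecidableEq T]
    (G : Matrix S T F) (m n : ℕ) (Sp : Fin m → Finset S) (Tp : Fin n → Finset T)
    (hSdisj : ∀ i j, i ≠ j → Disjoint (Sp i) (Sp j))
    (hTdisj : ∀ i j, i ≠ j → Disjoint (Tp i) (Tp j))
    (s : Fin m → ℕ) (t : Fin n → ℕ) (R : ℕ)
    (hs : ∑ i, s i = R) (ht : ∑ j, t j = R) :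
    (∃ (a : Fin m → Finset S) (b : Fin n → Finset T),
        (∀ i, a i ⊆ Sp i) ∧ (∀ i, (a i).card = s i) ∧
        (∀ j, b j ⊆ Tp j) ∧ (∀ j, (b j).card = t j) ∧
        IsNonsingularSub G (Finset.univ.biUnion a) (Finset.univ.biUnion b)) ↔
      ∀ (I : Finset (Fin m)) (K : Finset (Fin n)),
        (∑ i ∈ I, (s i : ℤ)) + (∑ k ∈ K, (t k : ℤ)) - R ≤
          (rk G (I.biUnion Sp) (K.biUnion Tp) : ℤ) := by
  have hcond_iff : (∀ (I : Finset (Fin m)) (K : Finset (Fin n)),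
      (∑ i ∈ I, (s i : ℤ)) + (∑ k ∈ K, (t k : ℤ)) - R ≤ (rk G (I.biUnion Sp) (K.biUnion Tp) : ℤ)) ↔
        TransversalCond G Sp Tp s t ∅ ∅ R := forall₂_congr fun I K => by
    rw [← Nat.cast_sum, ← Nat.cast_sum, card_empty, card_empty, union_empty, union_empty]
    omega
  rw [hcond_iff]
  constructor
  · rintro ⟨a, b, haSp, hacard, hbTp, hbcard, hab⟩
    exact hs ▸ transversalCond_of_isNonsingularSub hSdisj hTdisj haSp hacard hbTp hbcard hab
  · intro hcond
    obtain ⟨a, haSp, hacard, -, ha⟩ := hcond.exists_rows (by rw [card_empty, add_zero, ht])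
    have hA : #(univ.biUnion a ∪ ∅) = R := by
      rw [union_empty, card_biUnion_eq_sum hSdisj haSp hacard, hs]
    obtain ⟨b, hbTp, hbcard, -, hb⟩ :=
      (transversalCond_transpose.2 ha).exists_rows (by simpa using hA)
    have hB : #(univ.biUnion b ∪ ∅) = R := by
      rw [union_empty, card_biUnion_eq_sum hTdisj hbTp hbcard, ht]
    refine ⟨a, b, haSp, hacard, hbTp, hbcard, ?_⟩
    simpa only [union_empty] using (transversalCond_transpose.1 hb).isNonsingularSub hA hB

theorem block_matrix_transversal {F S T : Type*} [Field F] [Fintype S] [Fintype T]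
    [DecidableEq S] [DecidableEq T]
    (G : Matrix S T F) (m n : ℕ) (Sp : Fin m → Finset S) (Tp : Fin n → Finset T)
    (hSdisj : ∀ i j, i ≠ j → Disjoint (Sp i) (Sp j))
    (hScover : Finset.univ.biUnion Sp = (Finset.univ : Finset S))
    (hTdisj : ∀ i j, i ≠ j → Disjoint (Tp i) (Tp j))
    (hTcover : Finset.univ.biUnion Tp = (Finset.univ : Finset T))
    (s : Fin m → ℕ) (t : Fin n → ℕ) (R : ℕ)
    (hs : ∑ i, s i = R) (ht : ∑ j, t j = R) :
    (∃ (a : Fin m → Finset S) (b : Fin n → Finset T),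
        (∀ i, a i ⊆ Sp i) ∧ (∀ i, (a i).card = s i) ∧
        (∀ j, b j ⊆ Tp j) ∧ (∀ j, (b j).card = t j) ∧
        IsNonsingularSub G (Finset.univ.biUnion a) (Finset.univ.biUnion b)) ↔
      ∀ (I : Finset (Fin m)) (K : Finset (Fin n)),
        (∑ i ∈ I, (s i : ℤ)) + (∑ k ∈ K, (t k : ℤ)) - R ≤
          (rk G (I.biUnion Sp) (K.biUnion Tp) : ℤ) :=
  block_matrix_transversal_general G m n Sp Tp hSdisj hTdisj s t R hs ht
end

section
/- Rado–Hall theorem for matroids: Let (E,r) be a matroid with finite ground set and A₁,…,A_n ⊆ E, and let ℓ₁,…,ℓ_n be non-negative integers. There exist pairwise disjoint subsets 𝐚ᵢ ⊆ Aᵢ with |𝐚ᵢ| = ℓᵢ such that 𝐚₁ ∪ ⋯ ∪ 𝐚_n is independent, if and only if for every I ⊆ {1,…,n}, r(⋃_{i∈I} Aᵢ) ≥ Σ_{i∈I} ℓᵢ. -/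
/-!
Necessity: the sets `aᵢ` with `i ∈ I` form an independent set of size `∑ ℓᵢ` inside `⋃_{i ∈ I} Aᵢ`.

Sufficiency: replacing `Aᵢ` by `ℓᵢ` copies of itself reduces the theorem to Rado's theorem on
independent transversals, where every set is chosen once. That one is proved by Rado's shrinking
argument: while some set `Bᵢ` holds two elements `x ≠ y`, deleting `x` or deleting `y` from it
preserves the Rado condition, because if `I` and `J` witnessed the failure of both, then
submodularity applied to the two shrunken unions would give
`|I ∪ J| + |I ∩ J| - 1 ≤ r(X ∪ Y) + r(X ∩ Y) ≤ r X + r Y ≤ |I| + |J| - 2`.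
When all sets are singletons, the condition for the whole index set says that they are distinct
and that their union is independent.
-/

open Finset Function

section Rado

variable {E ι : Type*} [DecidableEq E] (r : Finset E → ℕ)

theorem rank_eq_card_of_subset (hle : ∀ A : Finset E, r A ≤ #A)
    (hsub : ∀ A B : Finset E, r (A ∪ B) + r (A ∩ B) ≤ r A + r B)
    {S T : Finset E} (hTS : T ⊆ S) (hS : r S = #S) : r T = #T := by
  have h := hsub T (S \ T)
  rw [union_sdiff_of_subset hTS, inter_sdiff_self] at h
  have := hle T
  have := hle (S \ T)
  have := card_sdiff_add_card_eq_card hTS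
  omega

theorem sum_card_le_rank_biUnion [Fintype ι] (hle : ∀ A : Finset E, r A ≤ #A)
    (hmono : ∀ A B : Finset E, A ⊆ B → r A ≤ r B)
    (hsub : ∀ A B : Finset E, r (A ∪ B) + r (A ∩ B) ≤ r A + r B)
    {A a : ι → Finset E} (haA : ∀ i, a i ⊆ A i) (hdisj : Pairwise (Disjoint on a))
    (hindep : r (univ.biUnion a) = #(univ.biUnion a)) (I : Finset ι) :
    ∑ i ∈ I, #(a i) ≤ r (I.biUnion A) :=
  calc ∑ i ∈ I, #(a i) = #(I.biUnion a) := (card_biUnion fun _ _ _ _ hij => hdisj hij).symm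
    _ = r (I.biUnion a) :=
      (rank_eq_card_of_subset r hle hsub (biUnion_subset_biUnion_of_subset_left a (subset_univ I))
        hindep).symm
    _ ≤ r (I.biUnion A) := hmono _ _ (biUnion_mono fun i _ => haA i)

def RadoCondition (B : ι → Finset E) : Prop :=
  ∀ I : Finset ι, #I ≤ r (I.biUnion B)

theorem radoCondition_sigma [DecidableEq ι] {A : ι → Finset E} {ℓ : ι → ℕ}
    (h : ∀ I : Finset ι, ∑ i ∈ I, ℓ i ≤ r (I.biUnion A)) :
    RadoCondition r fun p : Σ i, Fin (ℓ i) => A p.1 := by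
  intro I
  calc #I ≤ #((I.image Sigma.fst).sigma fun _ => univ) :=
        card_le_card fun p hp => mem_sigma.mpr ⟨mem_image_of_mem _ hp, mem_univ _⟩
    _ = ∑ i ∈ I.image Sigma.fst, ℓ i := by simp [card_sigma]
    _ ≤ r ((I.image Sigma.fst).biUnion A) := h _
    _ = r (I.biUnion fun p => A p.1) := by rw [image_biUnion]

theorem RadoCondition.exists_injective_of_card_le_one [Fintype ι]
    (hle : ∀ A : Finset E, r A ≤ #A) {B : ι → Finset E} (hB : RadoCondition r B)
    (hcard : ∀ i, #(B i) ≤ 1) :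
    ∃ f : ι → E, Injective f ∧ (∀ i, f i ∈ B i) ∧ r (univ.image f) = #(univ.image f) := by
  have hsingleton : ∀ i, ∃ e, B i = {e} := fun i => by
    have := hB {i}
    rw [singleton_biUnion, card_singleton] at this
    exact card_eq_one.mp (le_antisymm (hcard i) (this.trans (hle (B i))))
  choose f hf using hsingleton
  obtain rfl : B = fun i => {f i} := funext hf
  have hlower : #(univ : Finset ι) ≤ r (univ.image f) := by
    simpa only [biUnion_singleton] using hB univ
  have := hle (univ.image f)
  have : #(univ.image f) ≤ #(univ : Finset ι) := card_image_le
  have hinj : Set.InjOn f (univ : Finset ι) := card_image_iff.mp (by omega)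
  exact ⟨f, Set.injOn_univ.mp (by simpa using hinj), fun i => mem_singleton_self _, by omega⟩

variable [DecidableEq ι]

theorem biUnion_update_of_notMem {B : ι → Finset E} {I : Finset ι} {i : ι} (hi : i ∉ I)
    (s : Finset E) : I.biUnion (update B i s) = I.biUnion B :=
  biUnion_congr rfl fun _ hj => update_of_ne (ne_of_mem_of_not_mem hj hi) _ _

theorem biUnion_union_subset_update_erase {B : ι → Finset E} {I J : Finset ι} {i : ι}
    (hiI : i ∈ I) (hiJ : i ∈ J) {x y : E} (hxy : x ≠ y) :
    (I ∪ J).biUnion B ⊆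
      I.biUnion (update B i ((B i).erase x)) ∪ J.biUnion (update B i ((B i).erase y)) := by
  intro e he
  simp only [mem_union, mem_biUnion] at he ⊢
  grind [update_apply]

theorem biUnion_erase_inter_subset_update (B : ι → Finset E) (I J : Finset ι) (i : ι)
    (s t : Finset E) :
    ((I ∩ J).erase i).biUnion B ⊆ I.biUnion (update B i s) ∩ J.biUnion (update B i t) := by
  intro e he
  simp only [mem_inter, mem_erase, mem_biUnion] at he ⊢
  grind [update_apply]

theorem RadoCondition.update_erase_or (hmono : ∀ A B : Finset E, A ⊆ B → r A ≤ r B)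
    (hsub : ∀ A B : Finset E, r (A ∪ B) + r (A ∩ B) ≤ r A + r B) {B : ι → Finset E}
    (hB : RadoCondition r B) (i : ι) {x y : E} (hxy : x ≠ y) :
    RadoCondition r (update B i ((B i).erase x)) ∨
      RadoCondition r (update B i ((B i).erase y)) := by
  by_contra h
  simp only [RadoCondition, not_or, not_forall, not_le] at h
  obtain ⟨⟨I, hI⟩, ⟨J, hJ⟩⟩ := h
  have hiI : i ∈ I := by
    by_contra hi
    rw [biUnion_update_of_notMem hi] at hI
    exact (hB I).not_gt hI
  have hiJ : i ∈ J := by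
    by_contra hi
    rw [biUnion_update_of_notMem hi] at hJ
    exact (hB J).not_gt hJ
  set X := I.biUnion (update B i ((B i).erase x))
  set Y := J.biUnion (update B i ((B i).erase y))
  have hunion : #(I ∪ J) ≤ r (X ∪ Y) :=
    (hB _).trans (hmono _ _ (biUnion_union_subset_update_erase hiI hiJ hxy))
  have hinter : #((I ∩ J).erase i) ≤ r (X ∩ Y) :=
    (hB _).trans (hmono _ _ (biUnion_erase_inter_subset_update B I J i _ _))
  have := hsub X Y
  have := card_union_add_card_inter I J
  have := card_erase_add_one (mem_inter.mpr ⟨hiI, hiJ⟩)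
  omega

theorem update_erase_subset (B : ι → Finset E) (i j : ι) (x : E) :
    update B i ((B i).erase x) j ⊆ B j := by
  rcases eq_or_ne j i with rfl | hji
  · simpa using erase_subset x (B j)
  · simp [hji]

theorem sum_card_update_erase_lt [Fintype ι] {B : ι → Finset E} {i : ι} {x : E} (hx : x ∈ B i) :
    ∑ j, #(update B i ((B i).erase x) j) < ∑ j, #(B j) :=
  sum_lt_sum (fun j _ => card_le_card (update_erase_subset B i j x))
    ⟨i, mem_univ i, by simpa using card_erase_lt_of_mem hx⟩

theorem RadoCondition.exists_injective [Fintype ι] (hle : ∀ A : Finset E, r A ≤ #A)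
    (hmono : ∀ A B : Finset E, A ⊆ B → r A ≤ r B)
    (hsub : ∀ A B : Finset E, r (A ∪ B) + r (A ∩ B) ≤ r A + r B)
    {B : ι → Finset E} (hB : RadoCondition r B) :
    ∃ f : ι → E, Injective f ∧ (∀ i, f i ∈ B i) ∧ r (univ.image f) = #(univ.image f) := by
  induction hN : ∑ i, #(B i) using Nat.strong_induction_on generalizing B with
  | _ N ih =>
  by_cases hcard : ∀ i, #(B i) ≤ 1
  · exact hB.exists_injective_of_card_le_one r hle hcard
  push Not at hcard
  obtain ⟨i, hi⟩ := hcard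
  obtain ⟨x, hx, y, hy, hxy⟩ := one_lt_card.mp hi
  have shrink : ∀ z ∈ B i, RadoCondition r (update B i ((B i).erase z)) →
      ∃ f : ι → E, Injective f ∧ (∀ i, f i ∈ B i) ∧ r (univ.image f) = #(univ.image f) := by
    intro z hz hBz
    obtain ⟨f, hf, hfB, hindep⟩ := ih _ (hN ▸ sum_card_update_erase_lt hz) hBz rfl
    exact ⟨f, hf, fun j => update_erase_subset B i j z (hfB j), hindep⟩
  rcases hB.update_erase_or r hmono hsub i hxy with h | h
  exacts [shrink x hx h, shrink y hy h]

end Rado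

theorem rado_hall_general {E : Type*} [DecidableEq E]
    (r : Finset E → ℕ)
    (hle : ∀ A : Finset E, r A ≤ A.card)
    (hmono : ∀ A B : Finset E, A ⊆ B → r A ≤ r B)
    (hsub : ∀ A B : Finset E, r (A ∪ B) + r (A ∩ B) ≤ r A + r B)
    (n : ℕ) (A : Fin n → Finset E) (ℓ : Fin n → ℕ) :
    (∃ a : Fin n → Finset E,
        (∀ i, a i ⊆ A i) ∧ (∀ i, (a i).card = ℓ i) ∧
        (∀ i j, i ≠ j → Disjoint (a i) (a j)) ∧
        r (Finset.univ.biUnion a) = (Finset.univ.biUnion a).card) ↔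
      ∀ I : Finset (Fin n), ∑ i ∈ I, ℓ i ≤ r (I.biUnion A) := by
  constructor
  · rintro ⟨a, haA, hcard, hdisj, hindep⟩ I
    simpa only [hcard] using sum_card_le_rank_biUnion r hle hmono hsub haA hdisj hindep I
  · intro hcond
    obtain ⟨f, hf, hfA, hindep⟩ := (radoCondition_sigma r hcond).exists_injective r hle hmono hsub
    refine ⟨fun i => univ.image (f ∘ Sigma.mk i), fun i => ?_, fun i => ?_, fun i j hij => ?_, ?_⟩
    · simpa [image_subset_iff] using fun k => hfA ⟨i, k⟩
    · rw [card_image_of_injective _ (hf.comp sigma_mk_injective), card_univ, Fintype.card_fin]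
    · refine disjoint_left.mpr fun e hei hej => ?_
      obtain ⟨k, -, rfl⟩ := mem_image.mp hei
      obtain ⟨k', -, hk'⟩ := mem_image.mp hej
      exact hij (congrArg Sigma.fst (hf hk')).symm
    · have hunion : univ.biUnion (fun i => univ.image (f ∘ Sigma.mk i)) = univ.image f := by
        ext e
        simp [Sigma.exists]
      rwa [hunion]

theorem rado_hall {E : Type*} [Fintype E] [DecidableEq E]
    (r : Finset E → ℕ)
    (hle : ∀ A : Finset E, r A ≤ A.card)
    (hmono : ∀ A B : Finset E, A ⊆ B → r A ≤ r B)
    (hsub : ∀ A B : Finset E, r (A ∪ B) + r (A ∩ B) ≤ r A + r B)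
    (n : ℕ) (A : Fin n → Finset E) (ℓ : Fin n → ℕ) :
    (∃ a : Fin n → Finset E,
        (∀ i, a i ⊆ A i) ∧ (∀ i, (a i).card = ℓ i) ∧
        (∀ i j, i ≠ j → Disjoint (a i) (a j)) ∧
        r (Finset.univ.biUnion a) = (Finset.univ.biUnion a).card) ↔
      ∀ I : Finset (Fin n), ∑ i ∈ I, ℓ i ≤ r (I.biUnion A) :=
  rado_hall_general r hle hmono hsub n A ℓ
end
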